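/- arXiv:2010.07112 — 5 statements merged into one kernel-verified Lean document; each statement's English description precedes it below -/
import Mathlib

section
/- For every integer $m \geq 2$ and every complex number $z$ that is not of the form $n\omega_m^{-j}$ for positive integers $n$ and $0 \leq j \leq m-1$, the infinite product $\prod_{n=1}^{\infty}\frac{n^m}{n^m - z^m}$ converges and equals $\prod_{j=0}^{m-1}\Gamma(1-\omega_m^j z)$, where $\omega_m = e^{2\pi i/m}$. -/
open Finset Complex Filter Topology Nat

/-!
Write `w_j = -ω^j z`. Since `n^m - z^m = ∏_j (n - ω^j z)`, the `n`-th factor is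
`∏_j n / (n + w_j)`. Euler's limit formula `GammaSeq w N → Γ(w)` gives
`(∏_{n ≤ N} n / (n + w)) · N^w → Γ(w + 1)`, and the correcting powers multiply to
`N^(∑_j w_j) = 1` because the `m`-th roots of unity sum to zero. Convergence of the infinite
product follows from writing its factor as `(1 - z^m / n^m)⁻¹` with `∑ |z|^m / n^m < ∞`.
-/

theorem IsPrimitiveRoot.pow_sub_pow_eq_prod_range_sub_mul {R : Type*} [CommRing R] [IsDomain R]
    {ζ : R} {m : ℕ} (hζ : IsPrimitiveRoot ζ m) (hm : 0 < m) (x y : R) :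
    x ^ m - y ^ m = ∏ j ∈ range m, (x - ζ ^ j * y) := by
  simpa [Polynomial.eval_prod] using
    congrArg (Polynomial.eval x) (X_pow_sub_C_eq_prod hζ hm (rfl : y ^ m = y ^ m))

theorem Complex.prod_cpow_eq_cpow_sum {ι : Type*} {x : ℂ} (hx : x ≠ 0) (s : Finset ι)
    (w : ι → ℂ) :
    ∏ i ∈ s, x ^ w i = x ^ ∑ i ∈ s, w i := by
  simp only [cpow_def_of_ne_zero hx, ← exp_sum, mul_sum]

theorem Complex.prod_range_div_add_mul_cpow_eq_mul_GammaSeq {w : ℂ} (hw : w ≠ 0) (N : ℕ) :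
    (∏ i ∈ range N, ((i + 1 : ℂ) / (i + 1 + w))) * (N : ℂ) ^ w = w * GammaSeq w N := by
  have hfact : ∏ i ∈ range N, ((i : ℂ) + 1) = N ! := by
    rw [← prod_range_add_one_eq_factorial]; push_cast; rfl
  rw [GammaSeq, prod_range_succ', prod_div_distrib, hfact]
  simp only [Nat.cast_zero, add_zero, Nat.cast_add, Nat.cast_one]
  rw [show ∏ i ∈ range N, (w + (i + 1)) = ∏ i ∈ range N, ((i : ℂ) + 1 + w) from
    prod_congr rfl fun i _ => by ring]
  -- at a pole `w = -k` both sides vanish through division by zero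
  by_cases hP : ∏ i ∈ range N, ((i : ℂ) + 1 + w) = 0
  · simp [hP]
  · field_simp

theorem Complex.tendsto_prod_range_div_add_mul_cpow (w : ℂ) :
    Tendsto (fun N : ℕ => (∏ i ∈ range N, ((i + 1 : ℂ) / (i + 1 + w))) * (N : ℂ) ^ w) atTop
      (𝓝 (Gamma (w + 1))) := by
  rcases eq_or_ne w 0 with rfl | hw
  · simp only [add_zero, cpow_zero, mul_one, zero_add, Gamma_one]
    exact tendsto_const_nhds.congr fun N =>
      (prod_eq_one fun i _ => div_self (Nat.cast_add_one_ne_zero (R := ℂ) i)).symm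
  simpa only [prod_range_div_add_mul_cpow_eq_mul_GammaSeq hw, Gamma_add_one w hw] using
    (GammaSeq_tendsto_Gamma w).const_mul w

theorem Complex.tendsto_prod_range_pow_div_pow_sub_pow {ζ : ℂ} {m : ℕ} (hζ : IsPrimitiveRoot ζ m)
    (hm : 1 < m) (z : ℂ) :
    Tendsto (fun N : ℕ => ∏ i ∈ range N, ((i + 1 : ℂ) ^ m / ((i + 1) ^ m - z ^ m))) atTop
      (𝓝 (∏ j ∈ range m, Gamma (1 - ζ ^ j * z))) := by
  set w : ℕ → ℂ := fun j => -(ζ ^ j * z)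
  have hsum : ∑ j ∈ range m, w j = 0 := by
    simp only [w, sum_neg_distrib, ← sum_mul, hζ.geom_sum_eq_zero hm, zero_mul, neg_zero]
  have hfactor (x : ℂ) : x ^ m / (x ^ m - z ^ m) = ∏ j ∈ range m, x / (x + w j) := by
    rw [hζ.pow_sub_pow_eq_prod_range_sub_mul (by omega), prod_div_distrib, prod_const, card_range]
    simp only [w, sub_eq_add_neg]
  have hlim := tendsto_finsetProd (range m) fun j _ => tendsto_prod_range_div_add_mul_cpow (w j)
  simp only [w, neg_add_eq_sub] at hlim
  refine hlim.congr' ?_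
  filter_upwards [eventually_ne_atTop 0] with N hN
  rw [prod_mul_distrib, prod_cpow_eq_cpow_sum (Nat.cast_ne_zero.mpr hN), hsum, cpow_zero, mul_one]
  simp only [hfactor, w]
  exact prod_comm

theorem Complex.multipliable_pow_div_pow_sub_pow {m : ℕ} (hm : 1 < m) {z : ℂ}
    (hz : ∀ n : ℕ+, (n : ℂ) ^ m ≠ z ^ m) :
    Multipliable fun n : ℕ+ => (n : ℂ) ^ m / ((n : ℂ) ^ m - z ^ m) := by
  set f : ℕ+ → ℂ := fun n => -(z ^ m / (n : ℂ) ^ m)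
  have hf : Summable (‖f ·‖) := by
    refine ((summable_pnat_iff_summable_nat.mpr (Real.summable_nat_pow_inv.mpr hm)).mul_left
      (‖z‖ ^ m)).congr fun n => ?_
    simp [f, div_eq_mul_inv]
  have hn (n : ℕ+) : (n : ℂ) ^ m ≠ 0 := pow_ne_zero _ (Nat.cast_ne_zero.mpr n.ne_zero)
  have hf_eq (n : ℕ+) : 1 + f n = ((n : ℂ) ^ m - z ^ m) / (n : ℂ) ^ m := by
    simp only [f]
    field_simp
    ring
  have hne (n : ℕ+) : 1 + f n ≠ 0 := by
    rw [hf_eq]; exact div_ne_zero (sub_ne_zero.mpr (hz n)) (hn n)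
  refine ((multipliable_one_add_of_summable hf).inv₀
    (tprod_one_add_ne_zero_of_summable hne hf)).congr fun n => ?_
  rw [hf_eq, inv_div]

theorem stmt_3 (m : ℕ) (hm : 2 ≤ m) (z : ℂ)
    (hz : ∀ (n : ℕ+) (j : Fin m),
      z ≠ (n : ℂ) * (Complex.exp (2 * Real.pi * Complex.I / m) ^ (j : ℕ))⁻¹) :
    Multipliable (fun n : ℕ+ => (n : ℂ) ^ m / ((n : ℂ) ^ m - z ^ m)) ∧
      ∏' n : ℕ+, (n : ℂ) ^ m / ((n : ℂ) ^ m - z ^ m) =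
        ∏ j ∈ Finset.range m,
          Complex.Gamma (1 - Complex.exp (2 * Real.pi * Complex.I / m) ^ j * z) := by
  have hω := Complex.isPrimitiveRoot_exp m (by omega)
  have hzm (n : ℕ+) : (n : ℂ) ^ m ≠ z ^ m := by
    rw [← sub_ne_zero, hω.pow_sub_pow_eq_prod_range_sub_mul (by omega), prod_ne_zero_iff]
    intro j hj hzero
    refine hz n ⟨j, mem_range.mp hj⟩ ?_
    rw [sub_eq_zero.mp hzero, mul_comm,
      inv_mul_cancel_left₀ (pow_ne_zero _ (hω.ne_zero (by omega)))]
  have hmul := multipliable_pow_div_pow_sub_pow hm hzm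
  refine ⟨hmul, tendsto_nhds_unique ?_ (tendsto_prod_range_pow_div_pow_sub_pow hω hm z)⟩
  exact_mod_cast (hasProd_pnat_iff_hasProd_succ
    (f := fun n : ℕ => (n : ℂ) ^ m / ((n : ℂ) ^ m - z ^ m)).mp hmul.hasProd).tendsto_prod_nat
end

section
/- For every integer $m \geq 2$ and every complex $z$ with $|z| < 1$, $\prod_{j=0}^{m-1}\Gamma(1-\omega_m^j z) = \exp\left(\sum_{k=1}^{\infty}\frac{\zeta(mk)}{k} z^{mk}\right)$, where $\omega_m = e^{2\pi i/m}$. -/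
/-!
Euler's limit `Γ(s) = lim GammaSeq s n` reduces the product to a limit of finite products.
For `s_j = 1 - ωʲ z` one has `∑ⱼ s_j = m` and `∏ⱼ (s_j + i) = (i + 1)ᵐ - zᵐ`, so
`∏ⱼ GammaSeq s_j n = (n / (n + 1))ᵐ * ∏_{i ≤ n} (1 - zᵐ / (i + 1)ᵐ)⁻¹`.
Each factor is `exp (∑ₖ zᵐᵏ / (k (i + 1)ᵐᵏ))`, and summing the absolutely convergent double
series over `i` first turns the exponent into `∑ₖ ζ(mk) zᵐᵏ / k`.
-/

open Finset Complex Filter Topology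

open scoped Nat

lemma IsPrimitiveRoot.prod_range_sub_pow_mul {R : Type*} [CommRing R] [IsDomain R] {ζ : R}
    {n : ℕ} (hζ : IsPrimitiveRoot ζ n) (hn : 0 < n) (x y : R) :
    ∏ i ∈ range n, (x - ζ ^ i * y) = x ^ n - y ^ n := by
  simpa [Polynomial.eval_prod] using
    congrArg (Polynomial.eval x) (X_pow_sub_C_eq_prod hζ hn rfl).symm

namespace Complex

lemma prod_natCast_cpow {ι : Type*} (s : Finset ι) (f : ι → ℂ) {n : ℕ} (hn : n ≠ 0) :
    ∏ j ∈ s, (n : ℂ) ^ f j = (n : ℂ) ^ ∑ j ∈ s, f j := by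
  simp only [cpow_def_of_ne_zero (Nat.cast_ne_zero.2 hn), ← exp_sum, mul_sum]

lemma norm_div_natCast_pow_le (w : ℂ) (n m : ℕ) : ‖w / (n : ℂ) ^ m‖ ≤ ‖w‖ := by
  rcases n.eq_zero_or_pos with rfl | hn
  · rcases m.eq_zero_or_pos with rfl | hm
    · simp
    · simp [zero_pow hm.ne']
  · rw [norm_div, norm_pow, norm_natCast]
    exact div_le_self (norm_nonneg w) (one_le_pow₀ (by exact_mod_cast hn))

variable {m : ℕ}

lemma summable_div_natCast_pow_pow_div_natCast (hm : 2 ≤ m) {w : ℂ} (hw : ‖w‖ < 1) :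
    Summable fun p : ℕ × ℕ => (w / (p.1 : ℂ) ^ m) ^ p.2 / p.2 := by
  have hmaj : Summable fun p : ℕ × ℕ => 1 / (p.1 : ℝ) ^ 2 * ‖w‖ ^ p.2 :=
    (Real.summable_one_div_nat_pow.2 one_lt_two).mul_of_nonneg
      (summable_geometric_of_lt_one (norm_nonneg w) hw) (fun _ => by positivity)
      (fun _ => by positivity)
  refine Summable.of_norm_bounded hmaj fun ⟨n, k⟩ => ?_
  rcases k.eq_zero_or_pos with rfl | hk
  · simp
  rcases n.eq_zero_or_pos with rfl | hn
  · simp [zero_pow (by omega : m ≠ 0), zero_pow hk.ne']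
  have hn1 : (1 : ℝ) ≤ n := by exact_mod_cast hn
  calc ‖(w / (n : ℂ) ^ m) ^ k / k‖ ≤ ‖w‖ ^ k / (n : ℝ) ^ (m * k) := by
        rw [norm_div, norm_pow, norm_div, norm_pow, norm_natCast, norm_natCast, div_pow,
          ← pow_mul]
        exact div_le_self (by positivity) (by exact_mod_cast hk)
    _ ≤ ‖w‖ ^ k / (n : ℝ) ^ 2 :=
        div_le_div_of_nonneg_left (by positivity) (by positivity)
          (pow_le_pow_right₀ hn1 (by nlinarith))
    _ = 1 / (n : ℝ) ^ 2 * ‖w‖ ^ k := by ring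

lemma tsum_div_natCast_pow_pow_div_natCast (hm : 2 ≤ m) (w : ℂ) (k : ℕ) :
    ∑' n : ℕ, (w / (n : ℂ) ^ m) ^ k / k = riemannZeta (m * k) / k * w ^ k := by
  have hterm (n : ℕ) : (w / (n : ℂ) ^ m) ^ k / k = w ^ k / k * (1 / (n : ℂ) ^ (m * k)) := by
    rw [div_pow, ← pow_mul]
    ring
  simp_rw [hterm]
  rw [tsum_mul_left]
  rcases k.eq_zero_or_pos with rfl | hk
  · simp
  rw [← zeta_nat_eq_tsum_of_gt_one (by nlinarith), Nat.cast_mul]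
  ring

/-- Indexing from `n = 0` is harmless (`w / 0 ^ m = 0`, so that term is `-log 1 = 0`) and matches
`zeta_nat_eq_tsum_of_gt_one`; likewise the `k = 0` term of the exponent is `ζ 0 / 0 = 0`. -/
theorem hasSum_neg_log_one_sub_div_natCast_pow (hm : 2 ≤ m) {w : ℂ} (hw : ‖w‖ < 1) :
    HasSum (fun n : ℕ => -log (1 - w / (n : ℂ) ^ m))
      (∑' k : ℕ, riemannZeta (m * k) / k * w ^ k) := by
  have hG := summable_div_natCast_pow_pow_div_natCast hm hw
  have hrow (n : ℕ) : ∑' k : ℕ, (w / (n : ℂ) ^ m) ^ k / k = -log (1 - w / (n : ℂ) ^ m) :=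
    (hasSum_taylorSeries_neg_log ((norm_div_natCast_pow_le w n m).trans_lt hw)).tsum_eq
  simp_rw [← hrow, ← tsum_div_natCast_pow_pow_div_natCast hm w]
  rw [Summable.tsum_comm (f := fun n k : ℕ => (w / (n : ℂ) ^ m) ^ k / k) hG]
  exact hG.prod.hasSum

theorem hasProd_inv_one_sub_div_natCast_add_one_pow (hm : 2 ≤ m) {w : ℂ} (hw : ‖w‖ < 1) :
    HasProd (fun n : ℕ => (1 - w / ((n : ℂ) + 1) ^ m)⁻¹)
      (exp (∑' k : ℕ, riemannZeta (m * k) / k * w ^ k)) := by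
  have h := (hasSum_nat_add_iff' 1).2 (hasSum_neg_log_one_sub_div_natCast_pow hm hw)
  simp only [range_one, sum_singleton, Nat.cast_zero, zero_pow (by omega : m ≠ 0), div_zero,
    sub_zero, log_one, neg_zero, Nat.cast_add, Nat.cast_one] at h
  convert h.cexp using 1
  funext n
  have hu : ‖w / ((n : ℂ) + 1) ^ m‖ < 1 := by
    simpa using (norm_div_natCast_pow_le w (n + 1) m).trans_lt hw
  have hne : 1 - w / ((n : ℂ) + 1) ^ m ≠ 0 :=
    sub_ne_zero.2 fun h => by rw [← h, norm_one] at hu; exact lt_irrefl _ hu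
  simp [exp_neg, exp_log hne]

lemma prod_range_natCast_add_one (n : ℕ) : ∏ i ∈ range n, ((i : ℂ) + 1) = (n ! : ℂ) := by
  rw [← prod_range_add_one_eq_factorial]
  push_cast
  rfl

lemma prod_GammaSeq_one_sub_pow_mul {ω : ℂ} (hω : IsPrimitiveRoot ω m) (hm : 1 < m) (z : ℂ)
    {n : ℕ} (hn : n ≠ 0) :
    ∏ j ∈ range m, GammaSeq (1 - ω ^ j * z) n =
      ((n : ℂ) / (n + 1)) ^ m * ∏ i ∈ range (n + 1), (1 - z ^ m / ((i : ℂ) + 1) ^ m)⁻¹ := by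
  have hsum : ∑ j ∈ range m, (1 - ω ^ j * z) = m := by
    rw [sum_sub_distrib, ← sum_mul, hω.geom_sum_eq_zero hm]
    simp
  have hden (i : ℕ) : ∏ j ∈ range m, (1 - ω ^ j * z + i) =
      ((i : ℂ) + 1) ^ m * (1 - z ^ m / ((i : ℂ) + 1) ^ m) := by
    rw [mul_sub, mul_one, mul_div_cancel₀ _ (pow_ne_zero _ (Nat.cast_add_one_ne_zero i)),
      ← hω.prod_range_sub_pow_mul (by omega)]
    exact prod_congr rfl fun j _ => by ring
  unfold GammaSeq
  rw [prod_div_distrib, prod_mul_distrib, prod_natCast_cpow _ _ hn, hsum, cpow_natCast,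
    prod_const, card_range, Finset.prod_comm, prod_congr rfl fun i _ => hden i, prod_mul_distrib,
    prod_pow, prod_range_natCast_add_one, prod_inv_distrib, Nat.factorial_succ]
  rw [← div_eq_mul_inv, div_mul_eq_div_div]
  congr 1
  push_cast
  rw [mul_pow, div_pow,
    mul_div_mul_right _ _ (pow_ne_zero _ (Nat.cast_ne_zero.2 n.factorial_ne_zero))]

end Complex

theorem stmt_4 (m : ℕ) (hm : 2 ≤ m) (z : ℂ) (hz : ‖z‖ < 1) :
    ∏ j ∈ Finset.range m,
        Complex.Gamma (1 - Complex.exp (2 * Real.pi * Complex.I / m) ^ j * z) =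
      Complex.exp (∑' k : ℕ+, riemannZeta (m * k) / (k : ℂ) * z ^ (m * (k : ℕ))) := by
  set ω := exp (2 * Real.pi * I / m)
  have hω : IsPrimitiveRoot ω m := isPrimitiveRoot_exp m (by omega)
  have hzm : ‖z ^ m‖ < 1 := by
    rw [norm_pow]
    exact pow_lt_one₀ (norm_nonneg z) hz (by omega)
  have hΓ := tendsto_finsetProd (range m) fun j _ => GammaSeq_tendsto_Gamma (1 - ω ^ j * z)
  have hprod := (hasProd_inv_one_sub_div_natCast_add_one_pow hm hzm).tendsto_prod_nat
  have hlim := ((tendsto_natCast_div_add_atTop (1 : ℂ)).pow m).mul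
    (hprod.comp (tendsto_add_atTop_nat 1))
  rw [one_pow, one_mul] at hlim
  rw [tsum_pnat_eq_tsum_of_eq_zero (f := fun k => riemannZeta (m * k) / k * z ^ (m * k))
    (by simp)]
  simp_rw [pow_mul]
  refine tendsto_nhds_unique hΓ (hlim.congr' ?_)
  filter_upwards [eventually_ne_atTop 0] with n hn
  exact (prod_GammaSeq_one_sub_pow_mul hω (by omega) z hn).symm
end

section
/- For every positive integer $n$, $\prod_{s=1, s\neq n}^{\infty} \frac{s^2}{s^2 - n^2} = 2(-1)^{n-1}$. -/
/-!
Split off the finitely many factors with `s < n`. Writing `s = n + k + 1`, the remaining factors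
are `1 + n² / ((k + 1) (2n + k + 1))`; their partial products are
`C(2n, n) · (n + m)!² / (m! (2n + m)!)`, so they multiply to `C(2n, n)`. Factoring
`s² - n² = (s - n)(s + n)` shows that the finite part is `(-1)^(n-1) (n-1)! n! / (2n-1)!`,
which is `2 (-1)^(n-1) / C(2n, n)`.
-/

open Finset Filter Topology Nat

theorem tprod_pnat_ne_eq_prod_mul_tprod {M : Type*} [CommMonoid M] [TopologicalSpace M]
    [T2Space M] [ContinuousMul M] (f : ℕ → M) (n : ℕ+)
    (hf : Multipliable fun k ↦ f (n + k + 1)) :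
    ∏' s : {s : ℕ+ // s ≠ n}, f s = (∏ k ∈ range (n - 1), f (k + 1)) * ∏' k, f (n + k + 1) := by
  set g : ℕ → M := fun k ↦ if k + 1 = n then 1 else f (k + 1)
  have hg : ∏' s : {s : ℕ+ // s ≠ n}, f s = ∏' k, g k := by
    refine (tprod_subtype {s : ℕ+ | s ≠ n} (fun s : ℕ+ ↦ f s)).trans ?_
    rw [← Equiv.pnatEquivNat.symm.tprod_eq]
    refine tprod_congr fun k ↦ ?_
    simp only [g, Set.mulIndicator_apply, Set.mem_ofPred_eq, ne_eq, ← PNat.coe_inj,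
      Equiv.pnatEquivNat_symm_apply, succPNat_coe]
    exact ite_not _ _ _
  have hshift : (fun k ↦ g (k + n)) = fun k ↦ f (n + k + 1) := by
    ext k
    simp only [g, add_comm k, if_neg (show n + k + 1 ≠ n by omega)]
  have hgm : Multipliable fun k ↦ g (k + n) := by rwa [hshift]
  obtain ⟨p, hp⟩ : ∃ p, (n : ℕ) = p + 1 := Nat.exists_eq_add_one.mpr n.pos
  rw [hg, ← hgm.prod_mul_tprod_nat_mul', hshift, hp, prod_range_succ, Nat.add_sub_cancel]
  congr 1
  simp only [g, hp, if_pos rfl, mul_one]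
  exact prod_congr rfl fun k hk ↦ if_neg (by rw [mem_range] at hk; omega)

theorem tendsto_factorial_ratio_atTop (a b : ℕ) :
    Tendsto (fun m : ℕ ↦ ((a + m)! * (b + m)! : ℝ) / (m ! * (a + b + m)!)) atTop (𝓝 1) := by
  induction a with
  | zero =>
    refine tendsto_const_nhds.congr fun m ↦ ?_
    rw [zero_add, zero_add, div_self (by positivity)]
  | succ a ih =>
    have hstep : ∀ m : ℕ, ((a + 1 + m)! * (b + m)! : ℝ) / (m ! * (a + 1 + b + m)!) =
        ((a + m)! * (b + m)! : ℝ) / (m ! * (a + b + m)!) *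
          (((a + 1 : ℝ) + 1 * m) / ((a + b + 1 : ℝ) + 1 * m)) := by
      intro m
      rw [show a + 1 + m = (a + m) + 1 by omega, show a + 1 + b + m = (a + b + m) + 1 by omega,
        factorial_succ, factorial_succ]
      push_cast
      field_simp
      ring
    simp only [hstep]
    simpa using ih.mul (tendsto_add_mul_div_add_mul_atTop_nhds _ _ 1 one_ne_zero)

theorem prod_range_one_add_mul_div (a b m : ℕ) :
    ∏ k ∈ range m, (1 + (a * b : ℝ) / ((k + 1) * (a + b + k + 1))) =
      (a + b).choose a * (((a + m)! * (b + m)! : ℝ) / (m ! * (a + b + m)!)) := by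
  induction m with
  | zero =>
    rw [prod_range_zero, add_zero, add_zero, add_zero, cast_add_choose]
    field_simp
    ring
  | succ m ih =>
    rw [prod_range_succ, ih, ← add_assoc, ← add_assoc, ← add_assoc, factorial_succ,
      factorial_succ, factorial_succ, factorial_succ]
    push_cast
    field_simp
    ring

theorem summable_mul_div_mul_add (a b : ℕ) :
    Summable fun k : ℕ ↦ (a * b : ℝ) / ((k + 1) * (a + b + k + 1)) := by
  have hsq : Summable fun k : ℕ ↦ (a * b : ℝ) / ((k + 1) ^ 2) := by
    have := (summable_nat_add_iff 1).mpr (Real.summable_one_div_nat_pow.mpr one_lt_two)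
    simpa [div_eq_mul_inv] using this.mul_left (a * b : ℝ)
  refine hsq.of_nonneg_of_le (fun k ↦ by positivity) fun k ↦ ?_
  rw [sq]
  gcongr
  linarith [(a + b : ℕ).cast_nonneg (α := ℝ)]

theorem hasProd_one_add_mul_div (a b : ℕ) :
    HasProd (fun k : ℕ ↦ 1 + (a * b : ℝ) / ((k + 1) * (a + b + k + 1))) ((a + b).choose a) := by
  rw [(Real.multipliable_one_add_of_summable
    (summable_mul_div_mul_add a b)).hasProd_iff_tendsto_nat]
  simp only [prod_range_one_add_mul_div]
  simpa using (tendsto_factorial_ratio_atTop a b).const_mul ((a + b).choose a : ℝ)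

theorem prod_range_sq_sub_sq (p : ℕ) :
    ∏ k ∈ range p, ((k + 1 : ℝ) ^ 2 - (p + 1) ^ 2) =
      ((-1) ^ p * p ! * (p + 2).ascFactorial p : ℝ) := by
  have hfactor : ∀ k ∈ range p,
      (k + 1 : ℝ) ^ 2 - (p + 1) ^ 2 = -1 * (((p - k : ℕ) : ℝ) * ((p + 2 + k : ℕ) : ℝ)) := by
    intro k hk
    rw [Nat.cast_sub (mem_range.mp hk).le]
    push_cast
    ring
  rw [prod_congr rfl hfactor, prod_mul_distrib, prod_const, card_range, prod_mul_distrib,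
    ← Nat.cast_prod, ← Nat.cast_prod, ← descFactorial_eq_prod_range, descFactorial_self,
    ← ascFactorial_eq_prod_range, mul_assoc]

theorem prod_range_sq_div_sq_sub_sq (p : ℕ) :
    ∏ k ∈ range p, ((k + 1 : ℝ) ^ 2 / ((k + 1) ^ 2 - (p + 1) ^ 2)) =
      (2 * (-1) ^ p / (p + 1 + (p + 1)).choose (p + 1) : ℝ) := by
  have hnum : ∏ k ∈ range p, (k + 1 : ℝ) ^ 2 = (p ! : ℝ) ^ 2 := by
    rw [prod_pow, ← prod_range_add_one_eq_factorial]
    push_cast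
    rfl
  have hasc : ((p + 1)! * (p + 2).ascFactorial p : ℝ) = (p + 1 + p)! := by
    exact_mod_cast factorial_mul_ascFactorial (p + 1) p
  rw [prod_div_distrib, hnum, prod_range_sq_sub_sq, cast_add_choose,
    show p + 1 + (p + 1) = (p + 1 + p) + 1 by omega, factorial_succ (p + 1 + p), Nat.cast_mul,
    ← hasc, factorial_succ p]
  push_cast
  field_simp
  rw [← pow_mul, pow_mul', neg_one_sq, one_pow]
  ring

theorem stmt_9 (n : ℕ+) :
    ∏' s : {s : ℕ+ // s ≠ n}, ((s : ℝ) ^ 2 / ((s : ℝ) ^ 2 - (n : ℝ) ^ 2)) =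
      2 * (-1) ^ ((n : ℕ) - 1) := by
  obtain ⟨p, hp⟩ : ∃ p, (n : ℕ) = p + 1 := Nat.exists_eq_add_one.mpr n.pos
  set f : ℕ → ℝ := fun s ↦ (s : ℝ) ^ 2 / ((s : ℝ) ^ 2 - (n : ℝ) ^ 2)
  have htail : (fun k ↦ f (n + k + 1)) =
      fun k : ℕ ↦ 1 + (n * n : ℝ) / ((k + 1) * (n + n + k + 1)) := by
    ext k
    simp only [f]
    push_cast
    rw [show ((n : ℝ) + k + 1) ^ 2 - (n : ℝ) ^ 2 = (k + 1) * (n + n + k + 1) by ring]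
    field_simp
    ring
  have hfin : ∏ k ∈ range (n - 1), f (k + 1) = 2 * (-1) ^ p / (n + n : ℕ).choose n := by
    simp only [f, hp, Nat.add_sub_cancel]
    push_cast
    exact prod_range_sq_div_sq_sub_sq p
  have htprod := hasProd_one_add_mul_div n n
  rw [tprod_pnat_ne_eq_prod_mul_tprod f n (htail ▸ htprod.multipliable), htail, htprod.tprod_eq,
    hfin, div_mul_cancel₀ _ (Nat.cast_ne_zero.mpr (choose_pos (le_add_right _ _)).ne'), hp,
    Nat.add_sub_cancel]
end

section
/- For all complex $z$ not equal to a nonzero integer, $\pi z \csc(\pi z) = 1 + \sum_{n=1}^{\infty} \frac{2(-1)^n z^2}{z^2 - n^2}$, where for $z = 0$ the left side is interpreted as $1$. -/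
/-!
Since `csc w = cot (w / 2) - cot w`, the claim follows from the Mittag-Leffler expansion
`π z cot (π z) = 1 + ∑ₙ 2 z² / (z² - n²)` applied at `z` and at `z / 2`: the expansion at `z / 2`
is the sum over the even `n` alone, so twice it minus the one at `z` flips the signs of the odd
terms.
-/

open Complex Real

theorem HasSum.neg_one_pow_mul_of_odd {α : Type*} [Ring α] [UniformSpace α]
    [IsUniformAddGroup α] [CompleteSpace α] [T2Space α] {f : ℕ → α} {a b : α} (hf : HasSum f a)
    (hodd : HasSum (fun k => f (2 * k + 1)) b) :
    HasSum (fun n => (-1) ^ n * f n) (a - 2 * b) := by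
  have heven : HasSum (fun k => f (2 * k)) (a - b) := by
    have hs : Summable (fun k => f (2 * k)) :=
      hf.summable.comp_injective (mul_right_injective₀ two_ne_zero)
    convert hs.hasSum
    rw [← (hs.hasSum.even_add_odd hodd).unique hf, add_sub_cancel_right]
  convert HasSum.even_add_odd (f := fun n => (-1) ^ n * f n) (by simpa [pow_mul] using heven)
    (by simpa [pow_succ, pow_mul] using hodd.neg) using 1
  noncomm_ring

theorem Complex.inv_sin_two_mul (w : ℂ) : (sin (2 * w))⁻¹ = cot w - cot (2 * w) := by
  simp only [cot_eq_cos_div_sin, sin_two_mul, cos_two_mul]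
  rcases eq_or_ne (sin w) 0 with hs | hs
  · simp [hs]
  rcases eq_or_ne (cos w) 0 with hc | hc
  · simp [hc]
  field_simp
  ring

theorem Complex.hasSum_pi_mul_cot_sub_one {x : ℂ} (hx : x ∈ integerComplement) :
    HasSum (fun n : ℕ => 2 * x ^ 2 / (x ^ 2 - (n + 1) ^ 2)) (π * x * cot (π * x) - 1) := by
  have hcot := ((summable_cotTerm hx).hasSum_iff_tendsto_nat.mpr
    (tendsto_logDeriv_euler_cot_sub hx)).mul_left x
  rw [show π * x * cot (π * x) - 1 = x * (π * cot (π * x) - 1 / x) by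
    field_simp [integerComplement.ne_zero hx]]
  refine hcot.congr_fun fun n => ?_
  rw [cotTerm_identity hx, show x ^ 2 - (n + 1) ^ 2 = (x + (n + 1)) * (x - (n + 1)) by ring]
  ring

theorem Complex.hasSum_pi_mul_cot_half_sub_one {x : ℂ} (hx : x ∈ integerComplement) :
    HasSum (fun k : ℕ => 2 * x ^ 2 / (x ^ 2 - (((2 * k + 1 : ℕ) : ℂ) + 1) ^ 2))
      (π * (x / 2) * cot (π * (x / 2)) - 1) := by
  have hx2 : x / 2 ∈ integerComplement := by
    rintro ⟨n, hn⟩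
    exact hx ⟨2 * n, by push_cast; rw [hn]; ring⟩
  refine (hasSum_pi_mul_cot_sub_one hx2).congr_fun fun k => ?_
  have hk := sub_ne_zero.mpr (integerComplement_pow_two_ne_pow_two hx (2 * k + 2))
  push_cast at hk ⊢
  field_simp
  ring

theorem stmt_10 (z : ℂ) (hz : ∀ n : ℤ, n ≠ 0 → z ≠ (n : ℂ)) :
    (if z = 0 then (1 : ℂ) else (Real.pi : ℂ) * z / Complex.sin ((Real.pi : ℂ) * z)) =
      1 + ∑' n : ℕ+, 2 * (-1) ^ (n : ℕ) * z ^ 2 / (z ^ 2 - (n : ℂ) ^ 2) := by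
  rcases eq_or_ne z 0 with rfl | hz0
  · simp
  have hzZ : z ∈ integerComplement := by
    rintro ⟨n, rfl⟩
    exact hz n (by rintro rfl; simp at hz0) rfl
  have hsum := ((hasSum_pi_mul_cot_sub_one hzZ).neg_one_pow_mul_of_odd
    (hasSum_pi_mul_cot_half_sub_one hzZ)).neg
  rw [if_neg hz0, tsum_pnat_eq_tsum_succ (f := fun n : ℕ => 2 * (-1) ^ n * z ^ 2 / (z ^ 2 - n ^ 2)),
    (hsum.congr_fun fun n => ?_).tsum_eq]
  · rw [div_eq_mul_inv, show π * z = 2 * (π * (z / 2)) by ring, inv_sin_two_mul]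
    ring
  · push_cast
    ring
end

section
/- Let $a$ be a complex number with $a \neq 0,-1,-2,\dots$ and let $z$ be a complex number such that $a+z$ and $a-z$ avoid the nonpositive integers. Then $\frac{\Gamma(a+z)\Gamma(a-z)}{\Gamma(a)^2} = \prod_{k=1}^{\infty}\left(1 - \left(\frac{z}{a-1+k}\right)^2\right)^{-1}$. -/
/-!
Gauss's limit `Γ(s) = lim n^s n! / (s (s+1) ⋯ (s+n))` turns the quotient of Gamma values into the
limit of the partial products `∏_{j ≤ n} (a+j)² / ((a+j+z)(a+j-z))`: the powers `n^(a±z)` and the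
factorials cancel exactly against those of `Γ(a)²`. The infinite product converges because its
factors are `1 + O(1/n²)`.
-/

open Complex Filter Finset Asymptotics Topology

theorem isBigO_inv_one_sub_sub_one {𝕜 : Type*} [NormedField 𝕜] :
    (fun u : 𝕜 => (1 - u)⁻¹ - 1) =O[𝓝 0] id := by
  have hlim : Tendsto (fun u : 𝕜 => (1 - u)⁻¹) (𝓝 0) (𝓝 1) := by
    simpa using (tendsto_const_nhds.sub tendsto_id).inv₀ (by simp : (1 : 𝕜) - 0 ≠ 0)
  have hO : (fun u : 𝕜 => u * (1 - u)⁻¹) =O[𝓝 0] fun u => u * 1 :=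
    (isBigO_refl _ _).mul (hlim.isBigO_one 𝕜)
  refine hO.congr' ?_ (Eventually.of_forall fun u => mul_one u)
  filter_upwards [hlim.eventually_ne one_ne_zero] with u hu
  have : 1 - u ≠ 0 := by simpa using hu
  field_simp
  ring

theorem multipliable_inv_one_sub_of_summable_norm {ι 𝕜 : Type*} [NormedField 𝕜]
    [CompleteSpace 𝕜] {u : ι → 𝕜} (hu : Summable fun i => ‖u i‖) :
    Multipliable fun i => (1 - u i)⁻¹ := by
  have h := multipliable_one_add_of_summable (R := 𝕜)
    (isBigO_inv_one_sub_sub_one.comp_summable_norm hu)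
  simpa only [add_sub_cancel] using h

theorem isBigO_inv_add_natCast {𝕜 : Type*} [RCLike 𝕜] (a : 𝕜) :
    (fun n : ℕ => (a + n)⁻¹) =O[atTop] fun n : ℕ => (n : 𝕜)⁻¹ := by
  have h := (isBigO_refl (fun n : ℕ => (n : 𝕜)⁻¹) atTop).mul
    ((tendsto_natCast_div_add_atTop a).isBigO_one 𝕜)
  refine h.congr' ?_ (Eventually.of_forall fun n => mul_one _)
  filter_upwards [eventually_ne_atTop 0] with n hn
  rw [inv_mul_eq_div, div_div_cancel_left' (Nat.cast_ne_zero.mpr hn), add_comm]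

theorem summable_norm_div_add_natCast_sq {𝕜 : Type*} [RCLike 𝕜] (a z : 𝕜) :
    Summable fun n : ℕ => ‖(z / (a + n)) ^ 2‖ := by
  have hO : (fun n : ℕ => (z / (a + n)) ^ 2) =O[atTop] fun n : ℕ => ((n : ℝ) ^ 2)⁻¹ := by
    simp_rw [div_eq_mul_inv, mul_pow]
    refine (((isBigO_inv_add_natCast a).pow 2).const_mul_left (z ^ 2)).trans_le fun n => ?_
    simp
  exact summable_of_isBigO_nat (Real.summable_nat_pow_inv.mpr one_lt_two) hO.norm_left

theorem inv_one_sub_div_sq {K : Type*} [Field K] {b : K} (hb : b ≠ 0) (z : K) :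
    (1 - (z / b) ^ 2)⁻¹ = b ^ 2 / ((b + z) * (b - z)) := by
  have h : 1 - (z / b) ^ 2 = (b + z) * (b - z) / b ^ 2 := by
    field_simp
    ring
  rw [h, inv_div]

theorem GammaSeq_mul_GammaSeq_div_sq {a : ℂ} (ha : ∀ k : ℕ, a ≠ -k) (z : ℂ) {n : ℕ}
    (hn : n ≠ 0) :
    GammaSeq (a + z) n * GammaSeq (a - z) n / GammaSeq a n ^ 2 =
      ∏ j ∈ range (n + 1), (1 - (z / (a + j)) ^ 2)⁻¹ := by
  have hn' : (n : ℂ) ≠ 0 := Nat.cast_ne_zero.mpr hn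
  have hpow : (n : ℂ) ^ (a + z) * (n : ℂ) ^ (a - z) = ((n : ℂ) ^ a) ^ 2 := by
    rw [← cpow_add _ _ hn', ← cpow_nat_mul]
    ring_nf
  have hne : ((n : ℂ) ^ a) ^ 2 * (n.factorial : ℂ) ^ 2 ≠ 0 := by
    simp [hn', Nat.factorial_ne_zero n]
  have hfactor : ∀ j ∈ range (n + 1),
      (1 - (z / (a + j)) ^ 2)⁻¹ = (a + j) ^ 2 / ((a + z + j) * (a - z + j)) := fun j _ => by
    rw [inv_one_sub_div_sq (fun h => ha j (eq_neg_of_add_eq_zero_left h)), add_right_comm,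
      add_sub_right_comm]
  rw [prod_congr rfl hfactor, prod_div_distrib, prod_mul_distrib, prod_pow]
  simp only [GammaSeq]
  generalize ∏ j ∈ range (n + 1), (a + z + j) = A, ∏ j ∈ range (n + 1), (a - z + j) = B,
    ∏ j ∈ range (n + 1), (a + j) = C
  rw [div_pow, div_div_eq_mul_div]
  calc _ = ((n : ℂ) ^ (a + z) * (n : ℂ) ^ (a - z)) * (n.factorial : ℂ) ^ 2
          / (((n : ℂ) ^ a) ^ 2 * (n.factorial : ℂ) ^ 2) * (C ^ 2 / (A * B)) := by ring
    _ = C ^ 2 / (A * B) := by rw [hpow, div_self hne, one_mul]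

theorem stmt_11_general (a z : ℂ) (ha : ∀ k : ℕ, a ≠ -(k : ℂ)) :
    Complex.Gamma (a + z) * Complex.Gamma (a - z) / Complex.Gamma a ^ 2 =
      ∏' k : ℕ+, (1 - (z / (a - 1 + (k : ℂ))) ^ 2)⁻¹ := by
  have hGamma := ((GammaSeq_tendsto_Gamma (a + z)).mul (GammaSeq_tendsto_Gamma (a - z))).div
    ((GammaSeq_tendsto_Gamma a).pow 2) (pow_ne_zero 2 (Gamma_ne_zero ha))
  have hprod := (multipliable_inv_one_sub_of_summable_norm
    (summable_norm_div_add_natCast_sq a z)).hasProd.tendsto_prod_nat.comp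
      (tendsto_add_atTop_nat 1)
  have hpartial : ∀ᶠ n in atTop, ∏ j ∈ range (n + 1), (1 - (z / (a + j)) ^ 2)⁻¹ =
      GammaSeq (a + z) n * GammaSeq (a - z) n / GammaSeq a n ^ 2 := by
    filter_upwards [eventually_ne_atTop 0] with n hn
    exact (GammaSeq_mul_GammaSeq_div_sq ha z hn).symm
  rw [tendsto_nhds_unique hGamma (hprod.congr' hpartial),
    tprod_pnat_eq_tprod_succ (f := fun m : ℕ => (1 - (z / (a - 1 + m)) ^ 2)⁻¹)]
  refine tprod_congr fun n => ?_
  push_cast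
  ring

theorem stmt_11 (a z : ℂ) (ha : ∀ k : ℕ, a ≠ -(k : ℂ))
    (hz₁ : ∀ k : ℕ, a + z ≠ -(k : ℂ)) (hz₂ : ∀ k : ℕ, a - z ≠ -(k : ℂ)) :
    Complex.Gamma (a + z) * Complex.Gamma (a - z) / Complex.Gamma a ^ 2 =
      ∏' k : ℕ+, (1 - (z / (a - 1 + (k : ℂ))) ^ 2)⁻¹ :=
  stmt_11_general a z ha
end
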